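/- The equation y² + 15·z² = 2·(x⁴ - 10·x² + 15) has a solution (x,y,z) ∈ ℝ³ and a solution (x,y,z) ∈ (ℚ_p)³ for every prime p ≠ 5, but it has no solution (x,y,z) ∈ (ℚ_5)³. -/

import Mathlib

instance : Fact (Nat.Prime 5) := ⟨by norm_num⟩


open PadicInt Polynomial

variable {p : ℕ} [Fact p.Prime]

lemma tz_zero_iff (x : ℤ_[p]) : PadicInt.toZMod x = 0 ↔ (p : ℤ_[p]) ∣ x := by
  rw [← RingHom.mem_ker, ker_toZMod, PadicInt.maximalIdeal_eq_span_p, Ideal.mem_span_singleton]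

lemma norm_eq_one_of_tz_ne (x : ℤ_[p]) (h : PadicInt.toZMod x ≠ 0) : ‖x‖ = 1 := by
  by_contra hn
  have h1 : ‖x‖ < 1 := lt_of_le_of_ne (PadicInt.norm_le_one x) hn
  exact h ((tz_zero_iff x).2 ((PadicInt.norm_lt_one_iff_dvd x).1 h1))

lemma norm_lt_one_of_tz (x : ℤ_[p]) (h : PadicInt.toZMod x = 0) : ‖x‖ < 1 :=
  (PadicInt.norm_lt_one_iff_dvd x).2 ((tz_zero_iff x).1 h)

lemma exists_sqrt' (c a : ℤ_[p]) (hnorm : ‖a ^ 2 - c‖ < ‖2 * a‖ ^ 2) :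
    ∃ s : ℤ_[p], s ^ 2 = c := by
  obtain ⟨z, hz, -⟩ := hensels_lemma (F := X ^ 2 - C c) (a := a)
    (by simpa [Polynomial.derivative_pow] using hnorm)
  exact ⟨z, by simpa [sub_eq_zero] using hz⟩

lemma exists_sqrt (c a : ℤ_[p]) (h1 : PadicInt.toZMod (a ^ 2 - c) = 0)
    (h2 : PadicInt.toZMod (2 * a) ≠ 0) : ∃ s : ℤ_[p], s ^ 2 = c := by
  apply exists_sqrt' c a
  have := norm_lt_one_of_tz _ h1
  have := norm_eq_one_of_tz_ne _ h2
  rw [this]; simpa using norm_lt_one_of_tz _ h1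


open PadicInt



lemma five_dvd {x : ℤ_[5]} (h : PadicInt.toZMod x = 0) : ∃ r : ℤ_[5], x = 5 * r := by
  obtain ⟨r, hr⟩ := (tz_zero_iff x).1 h
  exact ⟨r, by exact_mod_cast hr⟩

lemma tz_five : PadicInt.toZMod (5 : ℤ_[5]) = 0 := by
  rw [show ((5 : ℤ_[5])) = ((5 : ℕ) : ℤ_[5]) by norm_num, map_natCast]
  exact ZMod.natCast_self 5

lemma tz_num (n : ℕ) : PadicInt.toZMod ((n : ℕ) : ℤ_[5]) = ((n : ℕ) : ZMod 5) := map_natCast _ n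

lemma five_ne : (5 : ℤ_[5]) ≠ 0 := by
  have : ((5:ℕ) : ℤ_[5]) ≠ 0 := Nat.cast_ne_zero.2 (by norm_num)
  exact_mod_cast this

lemma desc_even : ∀ n : ℕ, ∀ B D u : ℤ_[5], PadicInt.toZMod u = 2 →
    B ^ 2 + 15 * D ^ 2 ≠ 5 ^ (2 * n) * u := by
  intro n
  induction n with
  | zero =>
    intro B D u hu h
    rw [mul_zero, pow_zero, one_mul] at h
    have := congrArg PadicInt.toZMod h
    simp only [map_add, map_mul, map_pow, hu] at this
    revert this
    generalize PadicInt.toZMod B = a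
    generalize PadicInt.toZMod D = b
    revert a b; rw [show PadicInt.toZMod (15 : ℤ_[5]) = (15 : ZMod 5) by
      rw [show ((15 : ℤ_[5])) = ((15 : ℕ) : ℤ_[5]) by norm_num, map_natCast]; rfl]
    decide
  | succ n ih =>
    intro B D u hu h
    -- first step: B ≡ 0 mod 5
    have hB : PadicInt.toZMod B = 0 := by
      have := congrArg PadicInt.toZMod h
      simp only [map_add, map_mul, map_pow, tz_five, hu] at this
      rw [show PadicInt.toZMod (15 : ℤ_[5]) = (15 : ZMod 5) by
        rw [show ((15 : ℤ_[5])) = ((15 : ℕ) : ℤ_[5]) by norm_num, map_natCast]; rfl] at this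
      have hz : (0 : ZMod 5) ^ (2 * (n+1)) * 2 = 0 := by
        rw [zero_pow (by omega)]; ring
      rw [hz] at this
      revert this
      generalize PadicInt.toZMod B = a
      generalize PadicInt.toZMod D = b
      revert a b; decide
    obtain ⟨B', hB'⟩ := five_dvd hB
    have h2 : 5 * B' ^ 2 + 3 * D ^ 2 = 5 ^ (2 * n + 1) * u := by
      apply mul_left_cancel₀ five_ne
      rw [hB'] at h
      linear_combination h
    have hD : PadicInt.toZMod D = 0 := by
      have := congrArg PadicInt.toZMod h2
      simp only [map_add, map_mul, map_pow, tz_five, hu] at this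
      rw [show PadicInt.toZMod (3 : ℤ_[5]) = (3 : ZMod 5) by
        rw [show ((3 : ℤ_[5])) = ((3 : ℕ) : ℤ_[5]) by norm_num, map_natCast]; rfl] at this
      have hz : (0 : ZMod 5) ^ (2 * n + 1) * 2 = 0 := by
        rw [zero_pow (by omega)]; ring
      rw [hz] at this
      revert this
      generalize PadicInt.toZMod B' = a
      generalize PadicInt.toZMod D = b
      revert a b; decide
    obtain ⟨D', hD'⟩ := five_dvd hD
    have h3 : B' ^ 2 + 15 * D' ^ 2 = 5 ^ (2 * n) * u := by
      apply mul_left_cancel₀ five_ne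
      rw [hD'] at h2
      linear_combination h2
    exact ih B' D' u hu h3

lemma desc_odd : ∀ n : ℕ, ∀ B D u : ℤ_[5], PadicInt.toZMod u = 1 →
    B ^ 2 + 15 * D ^ 2 ≠ 5 ^ (2 * n + 1) * u := by
  intro n
  induction n with
  | zero =>
    intro B D u hu h
    rw [mul_zero, zero_add, pow_one] at h
    have hB : PadicInt.toZMod B = 0 := by
      have := congrArg PadicInt.toZMod h
      simp only [map_add, map_mul, map_pow, tz_five, hu, zero_mul] at this
      rw [show PadicInt.toZMod (15 : ℤ_[5]) = (15 : ZMod 5) by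
        rw [show ((15 : ℤ_[5])) = ((15 : ℕ) : ℤ_[5]) by norm_num, map_natCast]; rfl] at this
      revert this
      generalize PadicInt.toZMod B = a
      generalize PadicInt.toZMod D = b
      revert a b; decide
    obtain ⟨B', hB'⟩ := five_dvd hB
    have h2 : 5 * B' ^ 2 + 3 * D ^ 2 = u := by
      apply mul_left_cancel₀ five_ne
      rw [hB'] at h
      linear_combination h
    have := congrArg PadicInt.toZMod h2
    simp only [map_add, map_mul, map_pow, tz_five, hu, zero_mul] at this
    rw [show PadicInt.toZMod (3 : ℤ_[5]) = (3 : ZMod 5) by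
      rw [show ((3 : ℤ_[5])) = ((3 : ℕ) : ℤ_[5]) by norm_num, map_natCast]; rfl] at this
    revert this
    generalize PadicInt.toZMod B' = a
    generalize PadicInt.toZMod D = b
    revert a b; decide
  | succ n ih =>
    intro B D u hu h
    have hB : PadicInt.toZMod B = 0 := by
      have := congrArg PadicInt.toZMod h
      simp only [map_add, map_mul, map_pow, tz_five, hu] at this
      rw [show PadicInt.toZMod (15 : ℤ_[5]) = (15 : ZMod 5) by
        rw [show ((15 : ℤ_[5])) = ((15 : ℕ) : ℤ_[5]) by norm_num, map_natCast]; rfl] at this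
      have hz : (0 : ZMod 5) ^ (2 * (n+1) + 1) * 1 = 0 := by
        rw [zero_pow (by omega)]; ring
      rw [hz] at this
      revert this
      generalize PadicInt.toZMod B = a
      generalize PadicInt.toZMod D = b
      revert a b; decide
    obtain ⟨B', hB'⟩ := five_dvd hB
    have h2 : 5 * B' ^ 2 + 3 * D ^ 2 = 5 ^ (2 * n + 2) * u := by
      apply mul_left_cancel₀ five_ne
      rw [hB'] at h
      linear_combination h
    have hD : PadicInt.toZMod D = 0 := by
      have := congrArg PadicInt.toZMod h2
      simp only [map_add, map_mul, map_pow, tz_five, hu] at this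
      rw [show PadicInt.toZMod (3 : ℤ_[5]) = (3 : ZMod 5) by
        rw [show ((3 : ℤ_[5])) = ((3 : ℕ) : ℤ_[5]) by norm_num, map_natCast]; rfl] at this
      have hz : (0 : ZMod 5) ^ (2 * n + 2) * 1 = 0 := by
        rw [zero_pow (by omega)]; ring
      rw [hz] at this
      revert this
      generalize PadicInt.toZMod B' = a
      generalize PadicInt.toZMod D = b
      revert a b; decide
    obtain ⟨D', hD'⟩ := five_dvd hD
    have h3 : B' ^ 2 + 15 * D' ^ 2 = 5 ^ (2 * n + 1) * u := by
      apply mul_left_cancel₀ five_ne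
      rw [hD'] at h2
      linear_combination h2
    exact ih B' D' u hu h3


variable {p : ℕ} [Fact p.Prime]

lemma scale_one (Y : ℚ_[p]) : ∃ n : ℕ, ‖(p : ℚ_[p]) ^ n * Y‖ ≤ 1 := by
  obtain ⟨n, hn⟩ := pow_unbounded_of_one_lt ‖Y‖ (show (1:ℝ) < (p:ℝ) by exact_mod_cast (Fact.out : p.Prime).one_lt)
  refine ⟨n, ?_⟩
  rw [_root_.norm_mul, _root_.norm_pow, Padic.norm_p, inv_pow, inv_mul_le_iff₀ (by
    have hh : (1:ℝ) < (p:ℝ) := by exact_mod_cast (Fact.out : p.Prime).one_lt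
    positivity), mul_one]
  exact hn.le

lemma scale_two (Y Z : ℚ_[p]) :
    ∃ (n : ℕ) (B D : ℤ_[p]), (B : ℚ_[p]) = (p:ℚ_[p]) ^ n * Y ∧ (D : ℚ_[p]) = (p:ℚ_[p]) ^ n * Z := by
  obtain ⟨n1, h1⟩ := scale_one Y
  obtain ⟨n2, h2⟩ := scale_one Z
  have hple : ‖(p : ℚ_[p])‖ ≤ 1 := by
    rw [Padic.norm_p]
    exact inv_le_one_of_one_le₀ (by exact_mod_cast (Fact.out : p.Prime).one_le)
  have key : ∀ m k : ℕ, ∀ W : ℚ_[p], ‖(p:ℚ_[p]) ^ m * W‖ ≤ 1 → ‖(p:ℚ_[p]) ^ (m + k) * W‖ ≤ 1 := by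
    intro m k W hW
    have he : ‖(p:ℚ_[p])^(m+k)*W‖ = ‖(p:ℚ_[p])^k‖ * ‖(p:ℚ_[p])^m*W‖ := by
      rw [← _root_.norm_mul]; ring_nf
    rw [he]
    exact mul_le_one₀ (by rw [_root_.norm_pow]; exact pow_le_one₀ (norm_nonneg _) hple)
      (norm_nonneg _) hW
  exact ⟨n1 + n2, ⟨_, key n1 n2 Y h1⟩, ⟨_, by rw [add_comm]; exact key n2 n1 Z h2⟩, rfl, rfl⟩


open Polynomial

variable {p : ℕ} [Fact p.Prime]


@[simp, norm_cast] lemma coe_ofNat {p : ℕ} [Fact p.Prime] {n : ℕ} [n.AtLeastTwo] :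
    ((no_index (OfNat.ofNat n) : ℤ_[p]) : ℚ_[p]) = OfNat.ofNat n := by
  rw [← Nat.cast_ofNat (R := ℤ_[p]), PadicInt.coe_natCast, Nat.cast_ofNat]

-- p = 2 case
lemma case_two : ∃ x y z : ℚ_[2], y ^ 2 + 15 * z ^ 2 = 2 * (x ^ 4 - 10 * x ^ 2 + 15) := by
  obtain ⟨s, hs⟩ := exists_sqrt' (-15 : ℤ_[2]) 1 (by
    have e1 : ((1:ℤ_[2]) ^ 2 - (-15)) = (2:ℤ_[2]) ^ 4 := by norm_num
    have e2 : ((2:ℤ_[2]) * 1) = ((2:ℕ) : ℤ_[2]) := by norm_num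
    rw [e1, e2]
    have e3 : (2:ℤ_[2]) = ((2:ℕ) : ℤ_[2]) := by norm_num
    rw [e3, _root_.norm_pow, PadicInt.norm_p]
    norm_num)
  have hs' : ((s : ℚ_[2])) ^ 2 = -15 := by
    have := congrArg (fun t : ℤ_[2] => (t : ℚ_[2])) hs
    push_cast at this
    simpa using this
  have hsne : (s : ℚ_[2]) ≠ 0 := by
    intro h0
    rw [h0] at hs'
    norm_num at hs'
  refine ⟨0, 31 / 2, -29 / (2 * (s : ℚ_[2])), ?_⟩
  have h2ne : (2 : ℚ_[2]) ≠ 0 := two_ne_zero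
  field_simp
  linear_combination 841 * hs'

-- p = 3 case
lemma case_three : ∃ x y z : ℚ_[3], y ^ 2 + 15 * z ^ 2 = 2 * (x ^ 4 - 10 * x ^ 2 + 15) := by
  obtain ⟨s, hs⟩ := exists_sqrt (-2 : ℤ_[3]) 1 (by
    have e1 : ((1:ℤ_[3]) ^ 2 - (-2)) = ((3:ℕ) : ℤ_[3]) := by norm_num
    rw [e1, map_natCast]
    decide)
    (by
    have e2 : ((2:ℤ_[3]) * 1) = ((2:ℕ) : ℤ_[3]) := by norm_num
    rw [e2, map_natCast]
    decide)
  have hs' : ((s : ℚ_[3])) ^ 2 = -2 := by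
    have := congrArg (fun t : ℤ_[3] => (t : ℚ_[3])) hs
    push_cast at this
    simpa using this
  refine ⟨2, 3 * (s : ℚ_[3]), 0, ?_⟩
  linear_combination 9 * hs'

-- generic case
lemma case_generic (hp2 : p ≠ 2) (hp3 : p ≠ 3) (hp5 : p ≠ 5) :
    ∃ x y z : ℚ_[p], y ^ 2 + 15 * z ^ 2 = 2 * (x ^ 4 - 10 * x ^ 2 + 15) := by
  have hpp : p.Prime := Fact.out
  have hdvd30 : ¬ (p ∣ 30) := by
    intro hd
    have hle : p ≤ 30 := Nat.le_of_dvd (by norm_num) hd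
    have h2le : 2 ≤ p := hpp.two_le
    interval_cases p <;>
      first | exact hp2 rfl | exact hp3 rfl | exact hp5 rfl | (revert hpp hd; decide)
  have h30 : ((30 : ℕ) : ZMod p) ≠ 0 := by
    rw [Ne, ZMod.natCast_eq_zero_iff]
    exact hdvd30
  have h15 : ((15 : ZMod p)) ≠ 0 := by
    intro h0
    apply h30
    have : ((30 : ℕ) : ZMod p) = 2 * (15 : ZMod p) := by push_cast; ring
    rw [this, h0, mul_zero]
  have h2 : ((2 : ZMod p)) ≠ 0 := by
    intro h0
    apply h30
    have : ((30 : ℕ) : ZMod p) = 15 * (2 : ZMod p) := by push_cast; ring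
    rw [this, h0, mul_zero]
  have h30' : ((30 : ZMod p)) ≠ 0 := by
    intro h0; apply h30; push_cast; exact h0
  -- find a, b in ZMod p with a^2 + 15 b^2 = 30
  obtain ⟨a, b, hab⟩ := FiniteField.exists_root_sum_quadratic
    (f := (X ^ 2 : (ZMod p)[X])) (g := C 15 * X ^ 2 + C 0 * X + C (-30))
    (degree_X_pow 2) (degree_quadratic h15)
    (by rw [ZMod.card]; exact (hpp.eq_two_or_odd).resolve_left hp2)
  simp only [eval_add, eval_mul, eval_pow, eval_C, eval_X] at hab
  have hab' : a ^ 2 + 15 * b ^ 2 = 30 := by linear_combination hab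
  -- lift b
  set B : ℤ_[p] := ((b.val : ℕ) : ℤ_[p]) with hBdef
  have hBb : PadicInt.toZMod B = b := by
    rw [hBdef, map_natCast, ZMod.natCast_val, ZMod.cast_id]
  set A : ℤ_[p] := ((a.val : ℕ) : ℤ_[p]) with hAdef
  have hAa : PadicInt.toZMod A = a := by
    rw [hAdef, map_natCast, ZMod.natCast_val, ZMod.cast_id]
  by_cases ha : a = 0
  · -- 15 b^2 = 30, so b^2 = 2; solve z^2 = 2
    have hb2 : b ^ 2 = 2 := by
      apply mul_left_cancel₀ h15
      rw [ha] at hab'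
      linear_combination hab'
    have hbne : b ≠ 0 := by
      intro h0; rw [h0] at hb2; simp at hb2; exact h2 hb2.symm
    obtain ⟨s, hs⟩ := exists_sqrt (2 : ℤ_[p]) B
      (by rw [map_sub, map_pow, hBb, map_ofNat, hb2, sub_self])
      (by rw [map_mul, hBb, map_ofNat]; exact mul_ne_zero h2 hbne)
    have hs' : ((s : ℚ_[p])) ^ 2 = 2 := by
      have := congrArg (fun t : ℤ_[p] => (t : ℚ_[p])) hs
      push_cast at this
      simpa [coe_ofNat] using this
    refine ⟨0, 0, (s : ℚ_[p]), ?_⟩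
    linear_combination 15 * hs'
  · -- solve y^2 = 30 - 15 B^2
    obtain ⟨s, hs⟩ := exists_sqrt ((30 : ℤ_[p]) - 15 * B ^ 2) A
      (by
        rw [map_sub, map_pow, map_sub, map_mul, map_pow, hAa, hBb, map_ofNat, map_ofNat]
        linear_combination hab')
      (by rw [map_mul, hAa, map_ofNat]; exact mul_ne_zero h2 ha)
    have hs' : ((s : ℚ_[p])) ^ 2 = 30 - 15 * ((B : ℚ_[p])) ^ 2 := by
      have := congrArg (fun t : ℤ_[p] => (t : ℚ_[p])) hs
      push_cast at this
      simpa [coe_ofNat] using this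
    refine ⟨0, (s : ℚ_[p]), (B : ℚ_[p]), ?_⟩
    linear_combination hs'






lemma transfer (Y Z : ℚ_[5]) (c : ℤ_[5]) (h : Y ^ 2 + 15 * Z ^ 2 = (c : ℚ_[5])) :
    ∃ (n : ℕ) (B D : ℤ_[5]), B ^ 2 + 15 * D ^ 2 = 5 ^ (2 * n) * c := by
  obtain ⟨n, B, D, hB, hD⟩ := scale_two Y Z
  refine ⟨n, B, D, Subtype.coe_injective ?_⟩
  have c5 : (((5 : ℤ_[5]) : ℚ_[5])) = 5 := by
    rw [show (5:ℤ_[5]) = ((5:ℕ):ℤ_[5]) by norm_num, PadicInt.coe_natCast]; norm_num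
  have c15 : (((15 : ℤ_[5]) : ℚ_[5])) = 15 := by
    rw [show (15:ℤ_[5]) = ((15:ℕ):ℤ_[5]) by norm_num, PadicInt.coe_natCast]; norm_num
  push_cast [c5, c15]
  rw [hB, hD]
  have h5 : ((5:ℕ) : ℚ_[5]) = (5 : ℚ_[5]) := by norm_num
  rw [h5]
  linear_combination (5:ℚ_[5]) ^ (2*n) * h

lemma no_even (Y Z : ℚ_[5]) (u : ℤ_[5]) (hu : PadicInt.toZMod u = 2) :
    Y ^ 2 + 15 * Z ^ 2 ≠ (u : ℚ_[5]) := by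
  intro h
  obtain ⟨n, B, D, hn⟩ := transfer Y Z u h
  exact desc_even n B D u hu hn

lemma no_odd (Y Z : ℚ_[5]) (w : ℤ_[5]) (hw : PadicInt.toZMod w = 1) :
    Y ^ 2 + 15 * Z ^ 2 ≠ 5 * (w : ℚ_[5]) := by
  intro h
  have h' : Y ^ 2 + 15 * Z ^ 2 = ((5 * w : ℤ_[5]) : ℚ_[5]) := by push_cast; exact h
  obtain ⟨n, B, D, hn⟩ := transfer Y Z (5 * w) h'
  refine desc_odd n B D w hw ?_
  rw [hn]; ring

lemma q5_no_sol : ¬ ∃ x y z : ℚ_[5], y ^ 2 + 15 * z ^ 2 = 2 * (x ^ 4 - 10 * x ^ 2 + 15) := by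
  rintro ⟨x, y, z, h⟩
  have c5 : (((5 : ℤ_[5]) : ℚ_[5])) = 5 := by
    rw [show (5:ℤ_[5]) = ((5:ℕ):ℤ_[5]) by norm_num, PadicInt.coe_natCast]; norm_num
  by_cases hx : ‖x‖ ≤ 1
  · set X : ℤ_[5] := ⟨x, hx⟩ with hXdef
    have hXx : (X : ℚ_[5]) = x := rfl
    by_cases hX0 : PadicInt.toZMod X = 0
    · -- x = 5 r : valuation ≥ 1 case
      obtain ⟨r, hr⟩ := five_dvd hX0
      set w : ℤ_[5] := 2 * (125 * r ^ 4 - 50 * r ^ 2 + 3) with hwdef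
      have hw : PadicInt.toZMod w = 1 := by
        rw [hwdef]
        have h125 : PadicInt.toZMod (125 : ℤ_[5]) = 0 := by
          rw [show (125:ℤ_[5]) = ((125:ℕ):ℤ_[5]) by norm_num, map_natCast]; decide
        have h50 : PadicInt.toZMod (50 : ℤ_[5]) = 0 := by
          rw [show (50:ℤ_[5]) = ((50:ℕ):ℤ_[5]) by norm_num, map_natCast]; decide
        have h3 : PadicInt.toZMod (3 : ℤ_[5]) = 3 := by
          rw [show (3:ℤ_[5]) = ((3:ℕ):ℤ_[5]) by norm_num, map_natCast]; rfl
        have h2 : PadicInt.toZMod (2 : ℤ_[5]) = 2 := by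
          rw [show (2:ℤ_[5]) = ((2:ℕ):ℤ_[5]) by norm_num, map_natCast]; rfl
        simp only [map_mul, map_sub, map_add, map_pow, h125, h50, h3, h2]
        generalize PadicInt.toZMod r = a
        revert a; decide
      refine no_odd y z w hw ?_
      rw [h]
      have hx5r : x = 5 * (r : ℚ_[5]) := by
        rw [← hXx, hr]; push_cast [c5]; ring
      have cr : ∀ a : ℤ_[5], True := fun _ => trivial
      have : ((w : ℤ_[5]) : ℚ_[5]) = 2 * (125 * (r:ℚ_[5]) ^ 4 - 50 * (r:ℚ_[5]) ^ 2 + 3) := by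
        rw [hwdef]; push_cast; norm_num
      rw [this, hx5r]; ring
    · -- x unit case
      set u : ℤ_[5] := 2 * (X ^ 4 - 10 * X ^ 2 + 15) with hudef
      have hu : PadicInt.toZMod u = 2 := by
        rw [hudef]
        have h10 : PadicInt.toZMod (10 : ℤ_[5]) = 0 := by
          rw [show (10:ℤ_[5]) = ((10:ℕ):ℤ_[5]) by norm_num, map_natCast]; decide
        have h15 : PadicInt.toZMod (15 : ℤ_[5]) = 0 := by
          rw [show (15:ℤ_[5]) = ((15:ℕ):ℤ_[5]) by norm_num, map_natCast]; decide
        have h2 : PadicInt.toZMod (2 : ℤ_[5]) = 2 := by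
          rw [show (2:ℤ_[5]) = ((2:ℕ):ℤ_[5]) by norm_num, map_natCast]; rfl
        simp only [map_mul, map_sub, map_add, map_pow, h10, h15, h2]
        revert hX0
        generalize PadicInt.toZMod X = a
        revert a; decide
      refine no_even y z u hu ?_
      rw [h]
      have : ((u : ℤ_[5]) : ℚ_[5]) = 2 * (x ^ 4 - 10 * x ^ 2 + 15) := by
        rw [hudef, ← hXx]; push_cast; norm_num
      rw [this]
  · -- |x| > 1
    push_neg at hx
    have hx0 : x ≠ 0 := by
      intro h0; rw [h0, norm_zero] at hx; linarith
    have ht : ‖x⁻¹‖ ≤ 1 := by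
      rw [norm_inv]
      exact inv_le_one_of_one_le₀ hx.le
    set T : ℤ_[5] := ⟨x⁻¹, ht⟩ with hTdef
    have hTt : (T : ℚ_[5]) = x⁻¹ := rfl
    have hT0 : PadicInt.toZMod T = 0 := by
      rw [tz_zero_iff]
      rw [← PadicInt.norm_lt_one_iff_dvd]
      show ‖x⁻¹‖ < 1
      rw [norm_inv]
      exact inv_lt_one_of_one_lt₀ hx
    obtain ⟨S, hS⟩ := five_dvd hT0
    set u : ℤ_[5] := 2 * (1 - 250 * S ^ 2 + 9375 * S ^ 4) with hudef
    have hu : PadicInt.toZMod u = 2 := by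
      rw [hudef]
      have h250 : PadicInt.toZMod (250 : ℤ_[5]) = 0 := by
        rw [show (250:ℤ_[5]) = ((250:ℕ):ℤ_[5]) by norm_num, map_natCast]; decide
      have h9375 : PadicInt.toZMod (9375 : ℤ_[5]) = 0 := by
        rw [show (9375:ℤ_[5]) = ((9375:ℕ):ℤ_[5]) by norm_num, map_natCast]; decide
      have h2 : PadicInt.toZMod (2 : ℤ_[5]) = 2 := by
        rw [show (2:ℤ_[5]) = ((2:ℕ):ℤ_[5]) by norm_num, map_natCast]; rfl
      simp only [map_mul, map_sub, map_add, map_pow, map_one, h250, h9375, h2]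
      generalize PadicInt.toZMod S = a
      revert a; decide
    refine no_even (y / x ^ 2) (z / x ^ 2) u hu ?_
    have hinv : x⁻¹ = 5 * (S : ℚ_[5]) := by
      rw [← hTt, hS]; push_cast [c5]; ring
    have hcu : ((u : ℤ_[5]) : ℚ_[5]) = 2 * (1 - 250 * (S:ℚ_[5]) ^ 2 + 9375 * (S:ℚ_[5]) ^ 4) := by
      rw [hudef]; push_cast; norm_num
    rw [hcu]
    have h5ne : (5 : ℚ_[5]) ≠ 0 := by norm_num
    have hS' : (S : ℚ_[5]) = x⁻¹ / 5 := by
      rw [hinv, mul_comm, mul_div_assoc, div_self h5ne, mul_one]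
    rw [hS']
    field_simp
    linear_combination 625 * h


/-- The Châtelet equation `y² + 15·z² = 2·(x⁴ - 10·x² + 15)` has a real
solution and a `ℚ_p`-solution for every prime `p ≠ 5`, but no `ℚ_5`-solution. -/
theorem stmt_15 :
    (∃ x y z : ℝ, y ^ 2 + 15 * z ^ 2 = 2 * (x ^ 4 - 10 * x ^ 2 + 15)) ∧
    (∀ (p : ℕ) [Fact p.Prime], p ≠ 5 →
      ∃ x y z : ℚ_[p], y ^ 2 + 15 * z ^ 2 = 2 * (x ^ 4 - 10 * x ^ 2 + 15)) ∧
    (¬ ∃ x y z : ℚ_[5], y ^ 2 + 15 * z ^ 2 = 2 * (x ^ 4 - 10 * x ^ 2 + 15)) := by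
  refine ⟨⟨0, Real.sqrt 15, 1, ?_⟩, ?_, q5_no_sol⟩
  · rw [Real.sq_sqrt (by norm_num : (0:ℝ) ≤ 15)]
    norm_num
  · intro p _ hp5
    rcases eq_or_ne p 2 with rfl | hp2
    · exact case_two
    rcases eq_or_ne p 3 with rfl | hp3
    · exact case_three
    exact case_generic hp2 hp3 hp5
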